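/- Reblocking identity (the combinatorial identity (e:Z1Final)/(e:EIK2) underlying the change of scale in the renormalisation group map): Let R be a commutative ring, let 0 ≤ j < N, let I : B_j(Λ) → R, and let G : P_j(Λ) → R be an arbitrary function. For U ∈ P_{j+1}(Λ) define K(U) = Σ_{X ∈ P_j(Λ), X̄ = U} I^{U∖X} · G(X), where X̄ denotes the closure of X at scale j+1. Then Σ_{X ∈ P_j(Λ)} I^{Λ∖X} · G(X) = Σ_{U ∈ P_{j+1}(Λ)} I^{Λ∖U} · K(U), where for any set Z that is a union of j-blocks, I^Z = ∏_{b ∈ B_j(Λ), b ⊆ Z} I(b). -/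
import Mathlib


/-!
Reblocking identity (the combinatorial identity (e:Z1Final)/(e:EIK2)
underlying the change of scale in the renormalisation group map) from
"A renormalisation group method. V."

Setting: `Λ = ℤ^d/(L^N·ℤ^d)`; for a scale `k ≤ N`, the `k`-blocks of `Λ`
are the images, under the projection `ℤ^d → Λ`, of the translates by
`L^k·ℤ^d` of the cube `{x : 0 ≤ xᵢ < L^k}`; a polymer at scale `k` is a
union of `k`-blocks; the closure `X̄` of a scale-`j` polymer is the smallest
scale-`(j+1)` polymer containing `X`; and for `I : B_j(Λ) → R` one writes
`I^Z = ∏_{b ∈ B_j(Λ), b ⊆ Z} I(b)`.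

Statement: with `K(U) = Σ_{X : X̄ = U} I^{U∖X}·G(X)` for scale-`(j+1)`
polymers `U`, one has
`Σ_{X ∈ P_j(Λ)} I^{Λ∖X}·G(X) = Σ_{U ∈ P_{j+1}(Λ)} I^{Λ∖U}·K(U)`.
-/

namespace PaperT

/-- The discrete torus `Λ = ℤ^d/(L^N·ℤ^d)`, modelled as `Fin d → ZMod (L^N)`. -/
abbrev Torus (d L N : ℕ) := Fin d → ZMod (L ^ N)

/-- The projection `ℤ^d → Λ`. -/
def proj (d L N : ℕ) (x : Fin d → ℤ) : Torus d L N := fun i => (x i : ZMod (L ^ N))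

/-- `k`-blocks of the torus: images under the projection of the translates by
`L^k·ℤ^d` of the cube `{x ∈ ℤ^d : 0 ≤ xᵢ < L^k}`. -/
def IsBlock (d L N k : ℕ) (B : Set (Torus d L N)) : Prop :=
  ∃ m : Fin d → ℤ, B = proj d L N ''
    {x : Fin d → ℤ | ∀ i, (L : ℤ) ^ k * m i ≤ x i ∧ x i < (L : ℤ) ^ k * m i + (L : ℤ) ^ k}

/-- Polymers at scale `k`: unions of `k`-blocks. -/
def IsPolymer (d L N k : ℕ) (X : Set (Torus d L N)) : Prop :=
  ∃ 𝓑 : Set (Set (Torus d L N)), (∀ B ∈ 𝓑, IsBlock d L N k B) ∧ X = ⋃₀ 𝓑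

/-- The set of `k`-blocks contained in `X`. -/
def blocksIn (d L N k : ℕ) (X : Set (Torus d L N)) : Set (Set (Torus d L N)) :=
  {B | IsBlock d L N k B ∧ B ⊆ X}

/-- `I^X`: the product of `I(b)` over the `k`-blocks `b ⊆ X`
(the empty product is `1`). -/
noncomputable def blockProd {R : Type*} [CommRing R] (d L N k : ℕ)
    (I : Set (Torus d L N) → R) (X : Set (Torus d L N)) : R :=
  ∏ᶠ b ∈ blocksIn d L N k X, I b

/-- `U` is the closure `X̄` of the scale-`j` polymer `X`: the smallest
scale-`(j+1)` polymer containing `X`. -/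
def IsClosure (d L N j : ℕ) (X U : Set (Torus d L N)) : Prop :=
  IsPolymer d L N (j + 1) U ∧ X ⊆ U ∧
    ∀ Y, IsPolymer d L N (j + 1) Y → X ⊆ Y → U ⊆ Y

section Aux
variable {d L N k j : ℕ}

def blockOf (d L N k : ℕ) (y : Torus d L N) : Set (Torus d L N) :=
  {z | ∀ i, (z i).val / L ^ k = (y i).val / L ^ k}

lemma mem_blockOf_self (y : Torus d L N) : y ∈ blockOf d L N k y := fun _ => rfl

lemma blockOf_eq_of_mem {y z : Torus d L N} (h : z ∈ blockOf d L N k y) :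
    blockOf d L N k z = blockOf d L N k y := by
  ext w
  constructor <;> intro hw i
  · rw [hw i, h i]
  · rw [hw i, ← h i]

lemma val_key [NeZero (L ^ N)] (hL : 0 < L) (hk : k ≤ N) (m r : ℤ)
    (hr0 : 0 ≤ r) (hrs : r < (L : ℤ) ^ k) :
    (((L : ℤ) ^ k * m + r : ℤ) : ZMod (L ^ N)).val
      = L ^ k * (m % (L : ℤ) ^ (N - k)).toNat + r.toNat := by
  have hs : (0:ℤ) < (L:ℤ)^k := by positivity
  have ht : (0:ℤ) < (L:ℤ)^(N-k) := by positivity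
  set s := (L:ℤ)^k with hsdef
  set t := (L:ℤ)^(N-k) with htdef
  have hq : ((L^N : ℕ) : ℤ) = s * t := by
    push_cast
    rw [hsdef, htdef, ← pow_add]
    congr 1
    omega
  have hmod0 : 0 ≤ m % t := Int.emod_nonneg m ht.ne'
  have hmodt : m % t < t := Int.emod_lt_of_pos m ht
  have h1 : (((s * m + r : ℤ) : ZMod (L ^ N)).val : ℤ) = (s * m + r) % ((L^N : ℕ) : ℤ) :=
    ZMod.val_intCast _
  have h2 : (s * m + r) % (s * t) = s * (m % t) + r := by
    have hm : m % t + t * (m / t) = m := Int.emod_add_mul_ediv m t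
    have hrw : s * m + r = (s * (m % t) + r) + (s * t) * (m / t) := by
      linear_combination (-s) * hm
    rw [hrw, Int.add_mul_emod_self_left]
    refine Int.emod_eq_of_lt ?_ ?_
    · nlinarith
    · nlinarith [mul_le_mul_of_nonneg_left (show m % t ≤ t - 1 by omega) hs.le]
  have h3 : (((s * m + r : ℤ) : ZMod (L ^ N)).val : ℤ) = s * (m % t) + r := by
    rw [h1, hq, h2]
  have h4 : ((L ^ k * (m % t).toNat + r.toNat : ℕ) : ℤ) = s * (m % t) + r := by
    push_cast [Int.toNat_of_nonneg hmod0, Int.toNat_of_nonneg hr0]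
    rw [← hsdef]
  exact_mod_cast h3.trans h4.symm

lemma val_key_div [NeZero (L ^ N)] (hL : 0 < L) (hk : k ≤ N) (m r : ℤ)
    (hr0 : 0 ≤ r) (hrs : r < (L : ℤ) ^ k) :
    (((L : ℤ) ^ k * m + r : ℤ) : ZMod (L ^ N)).val / L ^ k
      = (m % (L : ℤ) ^ (N - k)).toNat := by
  rw [val_key hL hk m r hr0 hrs]
  have hcast : ((L ^ k : ℕ) : ℤ) = (L : ℤ) ^ k := by push_cast; ring
  have hrlt : r.toNat < L ^ k := by omega
  rw [Nat.mul_add_div (by positivity), Nat.div_eq_of_lt hrlt, add_zero]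

lemma coord_iff [NeZero (L ^ N)] (hL : 0 < L) (hk : k ≤ N) (m : ℤ) (x : ZMod (L ^ N)) :
    (∃ a : ℤ, ((L : ℤ) ^ k * m ≤ a ∧ a < (L : ℤ) ^ k * m + (L : ℤ) ^ k)
        ∧ (a : ZMod (L ^ N)) = x)
      ↔ x.val / L ^ k = (m % (L : ℤ) ^ (N - k)).toNat := by
  have hs : 0 < L ^ k := pow_pos hL k
  constructor
  · rintro ⟨a, ⟨h1, h2⟩, rfl⟩
    have ha : a = (L : ℤ) ^ k * m + (a - (L : ℤ) ^ k * m) := by ring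
    rw [ha]
    exact val_key_div hL hk m _ (by linarith) (by linarith)
  · intro h
    have hmlt : ((x.val % L ^ k : ℕ) : ℤ) < (L : ℤ) ^ k := by
      exact_mod_cast Nat.mod_lt _ hs
    refine ⟨(L : ℤ) ^ k * m + ((x.val % L ^ k : ℕ) : ℤ),
      ⟨le_add_of_nonneg_right (by positivity), by linarith⟩, ?_⟩
    have hv := val_key hL hk m ((x.val % L ^ k : ℕ) : ℤ) (by positivity) hmlt
    have hval : (((L : ℤ) ^ k * m + ((x.val % L ^ k : ℕ) : ℤ) : ℤ) : ZMod (L ^ N)).val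
        = x.val := by
      rw [hv, Int.toNat_natCast, ← h]
      exact Nat.div_add_mod x.val (L ^ k)
    exact ZMod.val_injective _ hval

lemma mem_proj_image (m : Fin d → ℤ) (z : Torus d L N) :
    z ∈ proj d L N ''
        {x : Fin d → ℤ | ∀ i, (L : ℤ) ^ k * m i ≤ x i ∧ x i < (L : ℤ) ^ k * m i + (L : ℤ) ^ k}
      ↔ ∀ i, ∃ a : ℤ, ((L : ℤ) ^ k * m i ≤ a ∧ a < (L : ℤ) ^ k * m i + (L : ℤ) ^ k)
          ∧ (a : ZMod (L ^ N)) = z i := by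
  constructor
  · rintro ⟨x, hx, rfl⟩ i
    exact ⟨x i, hx i, rfl⟩
  · intro h
    choose a h1 h2 using h
    exact ⟨a, h1, funext h2⟩

lemma isBlock_iff [NeZero (L ^ N)] (hL : 0 < L) (hk : k ≤ N) (B : Set (Torus d L N)) :
    IsBlock d L N k B ↔ ∃ y : Torus d L N, B = blockOf d L N k y := by
  constructor
  · rintro ⟨m, rfl⟩
    refine ⟨fun i => (((L : ℤ) ^ k * m i : ℤ) : ZMod (L ^ N)), ?_⟩
    ext z
    rw [mem_proj_image]
    have hy : ∀ i, ((((L : ℤ) ^ k * m i : ℤ) : ZMod (L ^ N)).val) / L ^ k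
        = (m i % (L : ℤ) ^ (N - k)).toNat := by
      intro i
      have h := val_key_div hL hk (m i) 0 le_rfl (by positivity)
      simpa using h
    simp only [blockOf, Set.mem_setOf_eq]
    constructor
    · intro h i
      rw [hy i]
      exact (coord_iff hL hk (m i) (z i)).mp (h i)
    · intro h i
      exact (coord_iff hL hk (m i) (z i)).mpr (by rw [← hy i]; exact h i)
  · rintro ⟨y, rfl⟩
    refine ⟨fun i => (((y i).val / L ^ k : ℕ) : ℤ), ?_⟩
    ext z
    rw [mem_proj_image]
    have hc : ∀ i, (((((y i).val / L ^ k : ℕ) : ℤ)) % (L : ℤ) ^ (N - k)).toNat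
        = (y i).val / L ^ k := by
      intro i
      have h1 : (y i).val / L ^ k < L ^ (N - k) := by
        apply Nat.div_lt_of_lt_mul
        calc (y i).val < L ^ N := ZMod.val_lt _
          _ = L ^ k * L ^ (N - k) := by rw [← pow_add]; congr 1; omega
      have h2 : ((((y i).val / L ^ k : ℕ)) : ℤ) < (L : ℤ) ^ (N - k) := by
        have hcast : ((L ^ (N - k) : ℕ) : ℤ) = (L : ℤ) ^ (N - k) := by push_cast; ring
        omega
      rw [Int.emod_eq_of_lt (by positivity) h2, Int.toNat_natCast]
    simp only [blockOf, Set.mem_setOf_eq]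
    constructor
    · intro h i
      exact (coord_iff hL hk _ (z i)).mpr (by rw [hc i]; exact h i)
    · intro h i
      rw [← hc i]
      exact (coord_iff hL hk _ (z i)).mp (h i)

end Aux

section Aux2
variable {d L N k j : ℕ}

lemma isPolymer_iff [NeZero (L ^ N)] (hL : 0 < L) (hk : k ≤ N) (X : Set (Torus d L N)) :
    IsPolymer d L N k X ↔ ∀ y ∈ X, blockOf d L N k y ⊆ X := by
  constructor
  · rintro ⟨𝓑, h𝓑, rfl⟩ y hy
    obtain ⟨B, hB, hyB⟩ := hy
    obtain ⟨w, rfl⟩ := (isBlock_iff hL hk B).mp (h𝓑 B hB)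
    rw [blockOf_eq_of_mem hyB]
    exact fun z hz => ⟨_, hB, hz⟩
  · intro h
    refine ⟨{B | ∃ y ∈ X, B = blockOf d L N k y}, ?_, ?_⟩
    · rintro B ⟨y, hy, rfl⟩
      exact (isBlock_iff hL hk _).mpr ⟨y, rfl⟩
    · ext z
      constructor
      · intro hz
        exact ⟨blockOf d L N k z, ⟨z, hz, rfl⟩, mem_blockOf_self z⟩
      · rintro ⟨B, ⟨y, hy, rfl⟩, hzB⟩
        exact h y hy hzB

lemma blockOf_subset_succ (y : Torus d L N) :
    blockOf d L N k y ⊆ blockOf d L N (k + 1) y := by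
  intro z hz i
  have h := hz i
  rw [pow_succ, ← Nat.div_div_eq_div_mul, ← Nat.div_div_eq_div_mul, h]

lemma isPolymer_of_succ [NeZero (L ^ N)] (hL : 0 < L) (hj1 : j + 1 ≤ N)
    {U : Set (Torus d L N)} (h : IsPolymer d L N (j + 1) U) : IsPolymer d L N j U := by
  rw [isPolymer_iff hL hj1] at h
  rw [isPolymer_iff hL (by omega)]
  exact fun y hy => (blockOf_subset_succ y).trans (h y hy)

def closureSet (d L N j : ℕ) (X : Set (Torus d L N)) : Set (Torus d L N) :=
  ⋃ y ∈ X, blockOf d L N (j + 1) y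

lemma subset_closureSet (X : Set (Torus d L N)) : X ⊆ closureSet d L N j X :=
  fun y hy => Set.mem_biUnion hy (mem_blockOf_self y)

lemma closureSet_subset [NeZero (L ^ N)] (hL : 0 < L) (hj1 : j + 1 ≤ N)
    {X Y : Set (Torus d L N)} (hY : IsPolymer d L N (j + 1) Y) (hXY : X ⊆ Y) :
    closureSet d L N j X ⊆ Y := by
  intro z hz
  obtain ⟨y, hy, hzy⟩ := Set.mem_iUnion₂.mp hz
  exact (isPolymer_iff hL hj1 Y).mp hY y (hXY hy) hzy

lemma isPolymer_closureSet [NeZero (L ^ N)] (hL : 0 < L) (hj1 : j + 1 ≤ N)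
    (X : Set (Torus d L N)) : IsPolymer d L N (j + 1) (closureSet d L N j X) := by
  rw [isPolymer_iff hL hj1]
  intro y hy
  obtain ⟨w, hw, hyw⟩ := Set.mem_iUnion₂.mp hy
  intro z hz
  refine Set.mem_biUnion hw ?_
  rw [← blockOf_eq_of_mem hyw]
  exact hz

lemma isClosure_iff [NeZero (L ^ N)] (hL : 0 < L) (hj1 : j + 1 ≤ N)
    (X U : Set (Torus d L N)) :
    IsClosure d L N j X U ↔ U = closureSet d L N j X := by
  constructor
  · rintro ⟨hU, hXU, hmin⟩
    exact subset_antisymm (hmin _ (isPolymer_closureSet hL hj1 X) (subset_closureSet X))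
      (closureSet_subset hL hj1 hU hXU)
  · rintro rfl
    exact ⟨isPolymer_closureSet hL hj1 X, subset_closureSet X,
      fun Y hY hXY => closureSet_subset hL hj1 hY hXY⟩

lemma blockProd_split [NeZero (L ^ N)] {R : Type*} [CommRing R] (hL : 0 < L) (hk : k ≤ N)
    (I : Set (Torus d L N) → R) {X U : Set (Torus d L N)}
    (hX : IsPolymer d L N k X) (hU : IsPolymer d L N k U) (hXU : X ⊆ U) :
    blockProd d L N k I (Set.univ \ X)
      = blockProd d L N k I (Set.univ \ U) * blockProd d L N k I (U \ X) := by
  have hdisj : Disjoint (blocksIn d L N k (Set.univ \ U)) (blocksIn d L N k (U \ X)) := by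
    rw [Set.disjoint_left]
    rintro B ⟨hB, hB1⟩ ⟨-, hB2⟩
    obtain ⟨y, rfl⟩ := (isBlock_iff hL hk B).mp hB
    exact (hB1 (mem_blockOf_self y)).2 (hB2 (mem_blockOf_self y)).1
  have hunion : blocksIn d L N k (Set.univ \ X)
      = blocksIn d L N k (Set.univ \ U) ∪ blocksIn d L N k (U \ X) := by
    ext B
    simp only [blocksIn, Set.mem_setOf_eq, Set.mem_union]
    constructor
    · rintro ⟨hB, hBX⟩
      obtain ⟨y, rfl⟩ := (isBlock_iff hL hk B).mp hB
      by_cases hyU : y ∈ U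
      · exact Or.inr ⟨hB, fun z hz =>
          ⟨(isPolymer_iff hL hk U).mp hU y hyU hz, (hBX hz).2⟩⟩
      · refine Or.inl ⟨hB, fun z hz => ⟨trivial, fun hzU => hyU ?_⟩⟩
        exact (isPolymer_iff hL hk U).mp hU z hzU
          (by rw [blockOf_eq_of_mem hz]; exact mem_blockOf_self y)
    · rintro (⟨hB, hBU⟩ | ⟨hB, hBUX⟩)
      · exact ⟨hB, fun z hz => ⟨trivial, fun hzX => (hBU hz).2 (hXU hzX)⟩⟩
      · exact ⟨hB, fun z hz => ⟨trivial, (hBUX hz).2⟩⟩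
  rw [blockProd, hunion, finprod_mem_union hdisj (Set.toFinite _) (Set.toFinite _)]
  rfl

end Aux2

/-- **Reblocking identity** ((e:Z1Final)/(e:EIK2)): if for every
scale-`(j+1)` polymer `U` one has `K(U) = Σ_{X ∈ P_j(Λ), X̄ = U} I^{U∖X}·G(X)`,
then `Σ_{X ∈ P_j(Λ)} I^{Λ∖X}·G(X) = Σ_{U ∈ P_{j+1}(Λ)} I^{Λ∖U}·K(U)`. -/
theorem reblocking (d L N j : ℕ) (hd : 1 ≤ d) (hL : 2 ≤ L) (hj : j < N)
    {R : Type*} [CommRing R]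
    (I G K : Set (Torus d L N) → R)
    (hK : ∀ U, IsPolymer d L N (j + 1) U →
      K U = ∑ᶠ X ∈ {X : Set (Torus d L N) |
          IsPolymer d L N j X ∧ IsClosure d L N j X U},
        blockProd d L N j I (U \ X) * G X) :
    (∑ᶠ X ∈ {X : Set (Torus d L N) | IsPolymer d L N j X},
        blockProd d L N j I (Set.univ \ X) * G X) =
      ∑ᶠ U ∈ {U : Set (Torus d L N) | IsPolymer d L N (j + 1) U},
        blockProd d L N j I (Set.univ \ U) * K U := by
  classical
  have hL0 : 0 < L := by omega
  haveI : NeZero (L ^ N) := ⟨(pow_pos hL0 N).ne'⟩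
  have hj1 : j + 1 ≤ N := hj
  set f : Set (Torus d L N) → R := fun X => blockProd d L N j I (Set.univ \ X) * G X with hf
  have hSfin : {X : Set (Torus d L N) | IsPolymer d L N j X}.Finite := Set.toFinite _
  have hTfin : {U : Set (Torus d L N) | IsPolymer d L N (j + 1) U}.Finite := Set.toFinite _
  rw [finsum_mem_eq_finite_toFinset_sum _ hSfin, finsum_mem_eq_finite_toFinset_sum _ hTfin]
  have hmap : ∀ X ∈ hSfin.toFinset, closureSet d L N j X ∈ hTfin.toFinset := by
    intro X hX
    simp only [Set.Finite.mem_toFinset, Set.mem_setOf_eq] at *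
    exact isPolymer_closureSet hL0 hj1 X
  rw [← Finset.sum_fiberwise_of_maps_to hmap f]
  apply Finset.sum_congr rfl
  intro U hU
  have hUpoly : IsPolymer d L N (j + 1) U := by
    simpa only [Set.Finite.mem_toFinset, Set.mem_setOf_eq] using hU
  have hfin2 : {X : Set (Torus d L N) |
      IsPolymer d L N j X ∧ IsClosure d L N j X U}.Finite := Set.toFinite _
  rw [hK U hUpoly, finsum_mem_eq_finite_toFinset_sum _ hfin2, Finset.mul_sum]
  have hset : hfin2.toFinset
      = hSfin.toFinset.filter (fun X => closureSet d L N j X = U) := by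
    ext X
    simp only [Set.Finite.mem_toFinset, Set.mem_setOf_eq, Finset.mem_filter,
      isClosure_iff hL0 hj1]
    constructor
    · rintro ⟨h1, h2⟩; exact ⟨h1, h2.symm⟩
    · rintro ⟨h1, h2⟩; exact ⟨h1, h2.symm⟩
  rw [hset]
  apply Finset.sum_congr rfl
  intro X hX
  simp only [Finset.mem_filter, Set.Finite.mem_toFinset, Set.mem_setOf_eq] at hX
  obtain ⟨hXpoly, hclX⟩ := hX
  have hXU : X ⊆ U := hclX ▸ subset_closureSet X
  have hUj : IsPolymer d L N j U := isPolymer_of_succ hL0 hj1 hUpoly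
  rw [hf]
  simp only []
  rw [blockProd_split hL0 (by omega) I hXpoly hUj hXU, mul_assoc]

end PaperT
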